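/- Let k be a commutative ring and G a finite group with |G| a unit of k. Then for any subgroup H ⊆ G one has β_k(G) ≤ [G:H]·β_k(H); in particular β_k(G) ≤ |G|. -/

import Mathlib

/-- `beta`: see above. -/
noncomputable def beta {A : Type*} [CommRing A] (𝒜 : ℕ → Set A) (B : Subring A) : ℕ∞ :=
  sInf ((↑) '' {n : ℕ | B ≤ Subring.closure {a : A | a ∈ B ∧ ∃ d ≤ n, a ∈ 𝒜 d}})

/-- An `ℕ`-graded commutative `k`-algebra equipped with an action of `G` by
degree-preserving `k`-algebra automorphisms. -/
structure GradedAlgebraWithAction (k : Type) [CommRing k] (G : Type) [Group G] :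
    Type 1 where
  carrier : Type
  [commRing : CommRing carrier]
  [algebra : Algebra k carrier]
  grading : ℕ → Submodule k carrier
  graded : GradedAlgebra grading
  action : G →* (carrier ≃ₐ[k] carrier)
  degPres : ∀ (g : G) (d : ℕ), ∀ a ∈ grading d, action g a ∈ grading d

attribute [instance] GradedAlgebraWithAction.commRing GradedAlgebraWithAction.algebra

namespace GradedAlgebraWithAction

variable {k G : Type} [CommRing k] [Group G] (X : GradedAlgebraWithAction k G)

/-- The invariant subring `A^G`. -/
def inv : Subring X.carrier where
  carrier := {a : X.carrier | ∀ g : G, X.action g a = a}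
  mul_mem' := by intro a b ha hb g; rw [map_mul, ha g, hb g]
  one_mem' := fun g => map_one (X.action g)
  add_mem' := by intro a b ha hb g; rw [map_add, ha g, hb g]
  zero_mem' := fun g => map_zero (X.action g)
  neg_mem' := by intro a ha g; rw [map_neg, ha g]

/-- The invariant subring fixed by a subgroup `H ≤ G`. -/
def invSub (H : Subgroup G) : Subring X.carrier where
  carrier := {a : X.carrier | ∀ g ∈ H, X.action g a = a}
  mul_mem' := by intro a b ha hb g hg; rw [map_mul, ha g hg, hb g hg]
  one_mem' := fun g _ => map_one (X.action g)
  add_mem' := by intro a b ha hb g hg; rw [map_add, ha g hg, hb g hg]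
  zero_mem' := fun g _ => map_zero (X.action g)
  neg_mem' := by intro a ha g hg; rw [map_neg, ha g hg]

/-- `β(A)` of the underlying graded algebra. -/
noncomputable def betaTop : ℕ∞ := beta (fun d => (X.grading d : Set X.carrier)) ⊤

/-- `β(A^G)` for the induced grading on the invariant ring. -/
noncomputable def betaInv : ℕ∞ := beta (fun d => (X.grading d : Set X.carrier)) X.inv

end GradedAlgebraWithAction

/-- `β_k(G)`: the supremum of `β(A^G)` over all `ℕ`-graded commutative `k`-algebras `A`
with an action of `G` by degree-preserving `k`-algebra automorphisms and `β(A) ≤ 1`. -/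
noncomputable def betaRing (k : Type) [CommRing k] (G : Type) [Group G] : ℕ∞ :=
  ⨆ (X : GradedAlgebraWithAction k G) (_ : X.betaTop ≤ 1), X.betaInv

/-!
Let `b = β_k(H)`, `m = [G:H]`, and let `A` satisfy `β(A) ≤ 1`, so that `A^H` is generated by
homogeneous `H`-invariants of degree `≤ b`. For `H`-invariants `c_q` indexed by the cosets
`q ∈ G/H`, with chosen representatives `q̄`, the product `∏_q (c_q - g (q̄ c_q))` vanishes for every
`g ∈ G`, its factor at `q = g⁻¹H` being zero. Summing over `g` and expanding, `|G| ∏_q c_q` lies in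
the ideal of `A` generated by the invariants `Tr (∏_{q ∈ t} q̄ c_q)`, `t ≠ ∅`, which have positive
degree `≤ m b`. A homogeneous invariant of degree `> m b` is a combination of products of more
than `m` generators of `A^H` of positive degree, hence lies in that ideal; applying the Reynolds
operator `|G|⁻¹ Tr` to such a representation writes it in terms of invariants of lower degree.
Taking `H = 1` gives `β_k(G) ≤ |G|`.
-/

open DirectSum Finset

theorem beta_le_coe_iff {A : Type*} [CommRing A] {𝒜 : ℕ → Set A} {B : Subring A} {n : ℕ} :
    beta 𝒜 B ≤ n ↔ B ≤ Subring.closure {a : A | a ∈ B ∧ ∃ d ≤ n, a ∈ 𝒜 d} := by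
  refine ⟨fun h => ?_, fun h => sInf_le ⟨n, h, rfl⟩⟩
  by_contra hB
  have hlt : ((n + 1 : ℕ) : ℕ∞) ≤ beta 𝒜 B := by
    refine le_sInf ?_
    rintro _ ⟨t, ht, rfl⟩
    refine Nat.cast_le.2 (Nat.succ_le_of_lt (lt_of_not_ge fun htn => hB (ht.trans ?_)))
    refine Subring.closure_mono ?_
    rintro a ⟨ha, d, hd, had⟩
    exact ⟨ha, d, hd.trans htn, had⟩
  exact absurd (Nat.cast_le.1 (hlt.trans h)) (Nat.not_succ_le_self n)

section GradedRing

variable {A σ : Type*} [CommRing A] [SetLike σ A] [AddSubgroupClass σ A] (𝒜 : ℕ → σ)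
  [GradedRing 𝒜]

theorem exists_mem_span_pow_of_mem_submonoidClosure {s t : Set A} {b : ℕ}
    (hs : ∀ a ∈ s, a ∈ 𝒜 0 ∨ a ∈ t) (ht : ∀ a ∈ t, ∃ d ≤ b, a ∈ 𝒜 d)
    {y : A} (hy : y ∈ Submonoid.closure s) :
    ∃ e j, y ∈ 𝒜 e ∧ y ∈ Ideal.span t ^ j ∧ e ≤ j * b := by
  induction hy using Submonoid.closure_induction with
  | mem a ha =>
    rcases hs a ha with ha0 | hat
    · exact ⟨0, 0, ha0, by simp, by simp⟩
    · obtain ⟨d, hdb, had⟩ := ht a hat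
      exact ⟨d, 1, had, by simpa using Ideal.subset_span hat, by simpa using hdb⟩
  | one => exact ⟨0, 0, SetLike.GradedOne.one_mem, by simp, by simp⟩
  | mul x y _ _ hx hy =>
    obtain ⟨e, i, hxe, hxi, hei⟩ := hx
    obtain ⟨e', i', hye, hyi, hei'⟩ := hy
    refine ⟨e + e', i + i', SetLike.mul_mem_graded hxe hye, ?_, ?_⟩
    · rw [pow_add]
      exact Ideal.mul_mem_mul hxi hyi
    · rw [add_mul]
      exact add_le_add hei hei'

theorem proj_mem_span_pow_of_mem_closure {s t : Set A} {b : ℕ}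
    (hs : ∀ a ∈ s, a ∈ 𝒜 0 ∨ a ∈ t) (ht : ∀ a ∈ t, ∃ d ≤ b, a ∈ 𝒜 d)
    {y : A} (hy : y ∈ Subring.closure s) {j D : ℕ} (hD : j * b < D) :
    GradedRing.proj 𝒜 D y ∈ Ideal.span t ^ j := by
  rw [Subring.mem_closure_iff] at hy
  refine (AddSubgroup.closure_le
    (K := (Ideal.span t ^ j).toAddSubgroup.comap (GradedRing.proj 𝒜 D))).2 ?_ hy
  intro y hy
  obtain ⟨e, i, hye, hyi, hei⟩ := exists_mem_span_pow_of_mem_submonoidClosure 𝒜 hs ht hy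
  change GradedRing.proj 𝒜 D y ∈ Ideal.span t ^ j
  rw [GradedRing.proj_apply]
  by_cases heD : e = D
  · subst heD
    rw [decompose_of_mem_same 𝒜 hye]
    exact Ideal.pow_le_pow_right (Nat.lt_of_mul_lt_mul_right (hD.trans_le hei)).le hyi
  · rw [decompose_of_mem_ne 𝒜 hye heD]
    exact zero_mem _

end GradedRing

attribute [instance] GradedAlgebraWithAction.graded

namespace GradedAlgebraWithAction

variable {k G : Type} [CommRing k] [Group G] (X : GradedAlgebraWithAction k G)

def lowDegree (B : Subring X.carrier) (n : ℕ) : Set X.carrier :=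
  {a | a ∈ B ∧ ∃ d ≤ n, a ∈ X.grading d}

def posLowDegree (B : Subring X.carrier) (n : ℕ) : Set X.carrier :=
  {a | a ∈ B ∧ ∃ d, 0 < d ∧ d ≤ n ∧ a ∈ X.grading d}

theorem betaInv_le_coe_iff {n : ℕ} :
    X.betaInv ≤ n ↔ X.inv ≤ Subring.closure (X.lowDegree X.inv n) :=
  beta_le_coe_iff

theorem inv_le_invSub (H : Subgroup G) : X.inv ≤ X.invSub H :=
  fun _ ha g _ => ha g

theorem proj_action (g : G) (D : ℕ) (a : X.carrier) :
    GradedRing.proj X.grading D (X.action g a) = X.action g (GradedRing.proj X.grading D a) := by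
  induction a using DirectSum.Decomposition.inductionOn X.grading with
  | zero => simp
  | @homogeneous e x =>
    obtain ⟨x, hx⟩ := x
    have hgx := X.degPres g e x hx
    simp only [GradedRing.proj_apply]
    by_cases heD : e = D
    · subst heD
      rw [decompose_of_mem_same _ hx, decompose_of_mem_same _ hgx]
    · rw [decompose_of_mem_ne _ hx heD, decompose_of_mem_ne _ hgx heD, map_zero]
  | add a b ha hb => simp only [map_add, ha, hb]

theorem proj_mem_inv {f : X.carrier} (hf : f ∈ X.inv) (D : ℕ) :
    GradedRing.proj X.grading D f ∈ X.inv := fun g => by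
  rw [← proj_action, hf g]

theorem inv_smul_natCard_smul (hu : IsUnit (Nat.card G : k)) (x : X.carrier) :
    (↑hu.unit⁻¹ : k) • (Nat.card G • x) = x := by
  rw [← Nat.cast_smul_eq_nsmul k, smul_smul, IsUnit.val_inv_mul, one_smul]

theorem mem_of_natCard_smul_mem (hu : IsUnit (Nat.card G : k)) {I : Ideal X.carrier}
    {x : X.carrier} (h : Nat.card G • x ∈ I) : x ∈ I := by
  rw [← X.inv_smul_natCard_smul hu x, Algebra.smul_def]
  exact I.mul_mem_left _ h

section Transfer

variable [Fintype G]

noncomputable def tr : X.carrier →ₗ[k] X.carrier := ∑ g : G, (X.action g).toLinearMap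

theorem tr_apply (a : X.carrier) : X.tr a = ∑ g : G, X.action g a := by
  simp [tr]

theorem tr_mem_inv (a : X.carrier) : X.tr a ∈ X.inv := fun g => by
  rw [tr_apply, map_sum]
  exact Fintype.sum_equiv (Equiv.mulLeft g) _ _ fun g' => by
    rw [← AlgEquiv.mul_apply, ← map_mul, Equiv.coe_mulLeft]

theorem tr_mem_grading {d : ℕ} {a : X.carrier} (ha : a ∈ X.grading d) :
    X.tr a ∈ X.grading d := by
  rw [tr_apply]
  exact Submodule.sum_mem _ fun g _ => X.degPres g d a ha

theorem tr_mul_of_mem_inv (a : X.carrier) {b : X.carrier} (hb : b ∈ X.inv) :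
    X.tr (a * b) = X.tr a * b := by
  simp only [tr_apply, map_mul, hb _, Finset.sum_mul]

theorem tr_of_mem_inv {a : X.carrier} (ha : a ∈ X.inv) : X.tr a = Nat.card G • a := by
  simp only [tr_apply, ha _, sum_const, card_univ, Nat.card_eq_fintype_card]

noncomputable def reynolds (hu : IsUnit (Nat.card G : k)) : X.carrier →ₗ[k] X.carrier :=
  (↑hu.unit⁻¹ : k) • X.tr

theorem reynolds_apply (hu : IsUnit (Nat.card G : k)) (a : X.carrier) : X.reynolds hu a = (↑hu.unit⁻¹ : k) • X.tr a := rfl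

theorem reynolds_mem_inv (hu : IsUnit (Nat.card G : k)) (a : X.carrier) : X.reynolds hu a ∈ X.inv := fun g => by
  rw [reynolds_apply, map_smul, X.tr_mem_inv a g]

theorem reynolds_of_mem_inv (hu : IsUnit (Nat.card G : k)) {a : X.carrier} (ha : a ∈ X.inv) : X.reynolds hu a = a := by
  rw [reynolds_apply, X.tr_of_mem_inv ha, X.inv_smul_natCard_smul hu]

theorem reynolds_mul_of_mem_inv (hu : IsUnit (Nat.card G : k)) (a : X.carrier) {b : X.carrier} (hb : b ∈ X.inv) :
    X.reynolds hu (a * b) = X.reynolds hu a * b := by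
  rw [reynolds_apply, reynolds_apply, X.tr_mul_of_mem_inv a hb, smul_mul_assoc]

/-- The inductive step of Hilbert's argument, stated for `a * x` rather than `x` because the
Reynolds operator is only `A^G`-linear. -/
theorem proj_reynolds_mul_mem_closure (hu : IsUnit (Nat.card G : k)) {N D : ℕ}
    (ih : ∀ D' < D, ∀ f ∈ X.inv,
      GradedRing.proj X.grading D' f ∈ Subring.closure (X.lowDegree X.inv N))
    {x : X.carrier} (hx : x ∈ Ideal.span (X.posLowDegree X.inv N)) (a : X.carrier) :
    GradedRing.proj X.grading D (X.reynolds hu (a * x)) ∈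
      Subring.closure (X.lowDegree X.inv N) := by
  induction hx using Submodule.span_induction generalizing a with
  | mem p hp =>
    obtain ⟨hp, e, he, heN, hpe⟩ := hp
    rw [X.reynolds_mul_of_mem_inv hu a hp, GradedRing.proj_apply]
    by_cases heD : e ≤ D
    · rw [coe_decompose_mul_of_right_mem_of_le _ hpe heD]
      exact Subring.mul_mem _ (ih _ (by omega) _ (X.reynolds_mem_inv hu a))
        (Subring.subset_closure ⟨hp, e, heN, hpe⟩)
    · rw [coe_decompose_mul_of_right_mem_of_not_le _ hpe heD]
      exact zero_mem _
  | zero => simp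
  | add x y _ _ hx hy =>
    rw [mul_add, map_add, map_add]
    exact add_mem (hx a) (hy a)
  | smul c x _ hx =>
    rw [smul_eq_mul, ← mul_assoc]
    exact hx (a * c)

theorem inv_le_closure_lowDegree (hu : IsUnit (Nat.card G : k)) {N : ℕ}
    (hI : ∀ D, N < D → ∀ f ∈ X.inv, f ∈ X.grading D → f ∈ Ideal.span (X.posLowDegree X.inv N)) :
    X.inv ≤ Subring.closure (X.lowDegree X.inv N) := by
  have hproj : ∀ D, ∀ f ∈ X.inv,
      GradedRing.proj X.grading D f ∈ Subring.closure (X.lowDegree X.inv N) := by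
    intro D
    induction D using Nat.strong_induction_on with
    | _ D ih =>
      intro f hf
      have hfD : GradedRing.proj X.grading D f ∈ X.grading D := SetLike.coe_mem _
      have hfi := X.proj_mem_inv hf D
      by_cases hDN : D ≤ N
      · exact Subring.subset_closure ⟨hfi, D, hDN, hfD⟩
      · have h := X.proj_reynolds_mul_mem_closure hu ih (hI D (by omega) _ hfi hfD) 1
        rwa [one_mul, X.reynolds_of_mem_inv hu hfi, GradedRing.proj_apply,
          decompose_of_mem_same _ hfD] at h
  intro f hf
  classical
  rw [← sum_support_decompose X.grading f]
  exact sum_mem fun D _ => hproj D f hf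

end Transfer

section Relative

variable {H : Subgroup G} [Fintype (G ⧸ H)]

theorem prod_sub_action_out_eq_zero {c : G ⧸ H → X.carrier} (hc : ∀ q, c q ∈ X.invSub H)
    (g : G) : ∏ q, (c q - X.action g (X.action q.out (c q))) = 0 := by
  obtain ⟨h, hh⟩ := QuotientGroup.mk_out_eq_mul H g⁻¹
  refine prod_eq_zero (mem_univ (QuotientGroup.mk g⁻¹ : G ⧸ H)) ?_
  rw [← AlgEquiv.mul_apply, ← map_mul, hh, mul_inv_cancel_left, hc _ h h.2, sub_self]

variable [Fintype G]

theorem natCard_smul_prod_add_sum_eq_zero [DecidableEq (G ⧸ H)] {c : G ⧸ H → X.carrier} (hc : ∀ q, c q ∈ X.invSub H) :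
    Nat.card G • ∏ q, c q + ∑ t ∈ univ.powerset.erase ∅,
      (-1) ^ #t * (∏ q ∈ univ \ t, c q) * X.tr (∏ q ∈ t, X.action q.out (c q)) = 0 := by
  have hexpand : ∑ t ∈ univ.powerset,
      (-1) ^ #t * (∏ q ∈ univ \ t, c q) * X.tr (∏ q ∈ t, X.action q.out (c q)) =
      ∑ g : G, ∏ q, (c q - X.action g (X.action q.out (c q))) := by
    simp_rw [prod_sub, tr_apply, map_prod, mul_sum]
    exact sum_comm
  rw [sum_eq_zero fun g _ => X.prod_sub_action_out_eq_zero hc g,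
    ← add_sum_erase _ _ (empty_mem_powerset _)] at hexpand
  rwa [card_empty, pow_zero, one_mul, sdiff_empty, prod_empty,
    X.tr_of_mem_inv (one_mem _), mul_smul_comm, mul_one] at hexpand

theorem prod_mem_span_posLowDegree (hu : IsUnit (Nat.card G : k)) {b : ℕ}
    {c : G ⧸ H → X.carrier} {d : G ⧸ H → ℕ} (hc : ∀ q, c q ∈ X.invSub H)
    (hcd : ∀ q, c q ∈ X.grading (d q)) (hd : ∀ q, 0 < d q ∧ d q ≤ b) :
    ∏ q, c q ∈ Ideal.span (X.posLowDegree X.inv (H.index * b)) := by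
  classical
  refine X.mem_of_natCard_smul_mem hu ?_
  rw [eq_neg_of_add_eq_zero_left (X.natCard_smul_prod_add_sum_eq_zero hc)]
  refine neg_mem (sum_mem fun t ht => Ideal.mul_mem_left _ _ (Ideal.subset_span ?_))
  have ht : t.Nonempty := nonempty_iff_ne_empty.2 (ne_of_mem_erase ht)
  refine ⟨X.tr_mem_inv _, ∑ q ∈ t, d q, sum_pos (fun q _ => (hd q).1) ht, ?_, ?_⟩
  · calc ∑ q ∈ t, d q ≤ #t * b := sum_le_card_nsmul _ _ _ fun q _ => (hd q).2
      _ ≤ H.index * b := by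
        rw [Subgroup.index_eq_card, Nat.card_eq_fintype_card]
        exact Nat.mul_le_mul_right _ (card_le_univ t)
  · exact X.tr_mem_grading
      (SetLike.prod_mem_graded X.grading d _ fun q _ => X.degPres _ _ _ (hcd q))

theorem span_pow_index_le (hu : IsUnit (Nat.card G : k)) (b : ℕ) :
    Ideal.span (X.posLowDegree (X.invSub H) b) ^ H.index ≤
      Ideal.span (X.posLowDegree X.inv (H.index * b)) := by
  rw [Ideal.span, Submodule.span_pow, Submodule.span_le]
  intro x hx
  obtain ⟨f, rfl⟩ := Set.mem_pow.1 hx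
  let e : G ⧸ H ≃ Fin H.index :=
    Fintype.equivFinOfCardEq (by rw [Subgroup.index_eq_card, Nat.card_eq_fintype_card])
  choose d hd using fun q => (f (e q)).2.2
  rw [List.prod_ofFn, ← e.prod_comp]
  exact X.prod_mem_span_posLowDegree hu (fun q => (f (e q)).2.1) (fun q => (hd q).2.2)
    fun q => ⟨(hd q).1, (hd q).2.1⟩

theorem inv_le_closure_lowDegree_index_mul (hu : IsUnit (Nat.card G : k)) {b : ℕ}
    (hH : X.invSub H ≤ Subring.closure (X.lowDegree (X.invSub H) b)) :
    X.inv ≤ Subring.closure (X.lowDegree X.inv (H.index * b)) := by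
  refine X.inv_le_closure_lowDegree hu fun D hD f hf hfD => X.span_pow_index_le hu b ?_
  have hs : ∀ a ∈ X.lowDegree (X.invSub H) b,
      a ∈ X.grading 0 ∨ a ∈ X.posLowDegree (X.invSub H) b := by
    rintro a ⟨ha, d, hdb, had⟩
    rcases Nat.eq_zero_or_pos d with rfl | hd
    · exact Or.inl had
    · exact Or.inr ⟨ha, d, hd, hdb, had⟩
  have h := proj_mem_span_pow_of_mem_closure X.grading hs
    (fun a ⟨_, d, _, hdb, had⟩ => ⟨d, hdb, had⟩) (hH (X.inv_le_invSub H hf)) hD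
  rwa [GradedRing.proj_apply, decompose_of_mem_same _ hfD] at h

end Relative

def restrict (H : Subgroup G) : GradedAlgebraWithAction k H where
  carrier := X.carrier
  grading := X.grading
  graded := X.graded
  action := X.action.comp H.subtype
  degPres g := X.degPres g

theorem restrict_inv (H : Subgroup G) : (X.restrict H).inv = X.invSub H := by
  ext a
  exact ⟨fun h g hg => h ⟨g, hg⟩, fun h g => h g g.2⟩

end GradedAlgebraWithAction

theorem betaInv_le_betaRing {k G : Type} [CommRing k] [Group G]
    (X : GradedAlgebraWithAction k G) (h : X.betaTop ≤ 1) : X.betaInv ≤ betaRing k G :=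
  le_iSup₂ (f := fun (X : GradedAlgebraWithAction k G) (_ : X.betaTop ≤ 1) => X.betaInv) X h

theorem betaRing_le_index_mul (k G : Type) [CommRing k] [Group G] [Finite G]
    (hu : IsUnit (Nat.card G : k)) (H : Subgroup G) :
    betaRing k G ≤ H.index * betaRing k H := by
  refine iSup₂_le fun X hX => ?_
  cases hb : betaRing k H with
  | top => simp [ENat.mul_top, H.index_ne_zero_of_finite]
  | coe b =>
    have := Fintype.ofFinite G
    have := Fintype.ofFinite (G ⧸ H)
    have hH := (X.restrict H).betaInv_le_coe_iff.1 (hb ▸ betaInv_le_betaRing (X.restrict H) hX)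
    rw [X.restrict_inv] at hH
    exact_mod_cast X.betaInv_le_coe_iff.2 (X.inv_le_closure_lowDegree_index_mul hu hH)

theorem betaRing_bot_le_one (k G : Type) [CommRing k] [Group G] :
    betaRing k (⊥ : Subgroup G) ≤ 1 := by
  refine iSup₂_le fun X hX => ?_
  have hinv : X.inv = ⊤ := by
    ext a
    simp only [Subring.mem_top, iff_true]
    intro g
    rw [Subsingleton.elim g 1, map_one, AlgEquiv.one_apply]
  rwa [GradedAlgebraWithAction.betaInv, hinv]

/-- relative Noether bound. Let `k` be a commutative ring and `G` a
finite group with `|G|` a unit of `k`.  Then for any subgroup `H ⊆ G` one has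
`β_k(G) ≤ [G:H] ⬝ β_k(H)`; in particular `β_k(G) ≤ |G|`. -/
theorem betaRing_le_index_mul_betaRing (k G : Type) [CommRing k] [Group G] [Finite G]
    (hunit : IsUnit ((Nat.card G : k))) (H : Subgroup G) :
    betaRing k G ≤ (H.index : ℕ∞) * betaRing k H ∧
      betaRing k G ≤ (Nat.card G : ℕ∞) := by
  refine ⟨betaRing_le_index_mul k G hunit H, ?_⟩
  calc betaRing k G ≤ (⊥ : Subgroup G).index * betaRing k (⊥ : Subgroup G) :=
        betaRing_le_index_mul k G hunit ⊥
    _ ≤ (⊥ : Subgroup G).index * 1 := by gcongr; exact betaRing_bot_le_one k G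
    _ = Nat.card G := by rw [mul_one, Subgroup.index_bot]
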